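/- arXiv:2210.06232 — 2 statements merged into one kernel-verified Lean document; each statement's English description precedes it below -/
import Mathlib

section
/- Let Ω1, Ω2, Ω3 be pairwise commuting n×n complex matrices and let K be the 3n×3n block matrix K = [[0, −Ω3, Ω2], [Ω3, 0, −Ω1], [−Ω2, Ω1, 0]]. Then K³ = −P·K, where P is the block-diagonal 3n×3n matrix with each diagonal block equal to Ψ := Ω1² + Ω2² + Ω3². -/
/-!
Writing `ω = (Ω1, Ω2, Ω3)`, `K` is the matrix of `v ↦ ω × v`, a `3 × 3` matrix over the ring of
`n × n` matrices. Because the `Ωᵢ` commute, the usual identities `K ω = 0` and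
`K² = ω ωᵀ - |ω|²` hold over this noncommutative ring, whence `K³ = K ω ωᵀ - |ω|² K = -|ω|² K`.
The block matrix `blockMat3` is `Matrix.comp`, a ring isomorphism, so the identity transfers.
-/

open Matrix

/-- A `3n × 3n` block matrix built from a `3 × 3` array of `n × n` blocks. -/
def blockMat3 {n : ℕ} {α : Type*} (A : Fin 3 → Fin 3 → Matrix (Fin n) (Fin n) α) :
    Matrix (Fin 3 × Fin n) (Fin 3 × Fin n) α :=
  Matrix.of fun p q => A p.1 q.1 p.2 q.2

namespace Matrix

variable {R : Type*} [Ring R] {a b c : R}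

def crossMatrix (a b c : R) : Matrix (Fin 3) (Fin 3) R :=
  !![0, -c, b; c, 0, -a; -b, a, 0]

theorem crossMatrix_mulVec_self (hab : Commute a b) (hac : Commute a c) (hbc : Commute b c) :
    crossMatrix a b c *ᵥ ![a, b, c] = 0 := by
  ext i
  fin_cases i <;> simp [crossMatrix, hab.eq, hac.eq, hbc.eq]

theorem crossMatrix_sq (hab : Commute a b) (hac : Commute a c) (hbc : Commute b c) :
    crossMatrix a b c ^ 2 =
      vecMulVec ![a, b, c] ![a, b, c] - scalar (Fin 3) (a ^ 2 + b ^ 2 + c ^ 2) := by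
  rw [scalar_apply, diagonal_fin_three]
  ext i j
  fin_cases i <;> fin_cases j <;> simp [sq, crossMatrix, hab.eq, hac.eq, hbc.eq] <;> abel

theorem commute_scalar_crossMatrix {s : R} (ha : Commute s a) (hb : Commute s b)
    (hc : Commute s c) : Commute (scalar (Fin 3) s) (crossMatrix a b c) := by
  rw [scalar_commute_iff]
  ext i j
  fin_cases i <;> fin_cases j <;> simp [crossMatrix, ha.eq, hb.eq, hc.eq]

theorem crossMatrix_pow_three (hab : Commute a b) (hac : Commute a c) (hbc : Commute b c) :
    crossMatrix a b c ^ 3 = -(scalar (Fin 3) (a ^ 2 + b ^ 2 + c ^ 2) * crossMatrix a b c) := by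
  have hsum {x : R} (ha : Commute a x) (hb : Commute b x) (hc : Commute c x) :
      Commute (a ^ 2 + b ^ 2 + c ^ 2) x :=
    ((ha.pow_left 2).add_left (hb.pow_left 2)).add_left (hc.pow_left 2)
  have hs : Commute (scalar (Fin 3) (a ^ 2 + b ^ 2 + c ^ 2)) (crossMatrix a b c) :=
    commute_scalar_crossMatrix (hsum (.refl a) hab.symm hac.symm) (hsum hab (.refl b) hbc.symm)
      (hsum hac hbc (.refl c))
  calc crossMatrix a b c ^ 3
      = crossMatrix a b c * crossMatrix a b c ^ 2 := pow_succ' _ _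
    _ = -(scalar (Fin 3) (a ^ 2 + b ^ 2 + c ^ 2) * crossMatrix a b c) := by
      rw [crossMatrix_sq hab hac hbc, mul_sub, mul_vecMulVec, crossMatrix_mulVec_self hab hac hbc,
        zero_vecMulVec, hs.eq, zero_sub]

end Matrix

theorem blockMat3_eq_compRingEquiv {n : ℕ} {α : Type*} [AddCommMonoid α] [Mul α]
    (A : Fin 3 → Fin 3 → Matrix (Fin n) (Fin n) α) :
    blockMat3 A = compRingEquiv (Fin 3) (Fin n) α (of A) := rfl

/-- for pairwise commuting `Ω1, Ω2, Ω3`, the cross-product block matrix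
`K = [[0,-Ω3,Ω2],[Ω3,0,-Ω1],[-Ω2,Ω1,0]]` satisfies `K³ = -P·K`, where `P` is block
diagonal with blocks `Ψ = Ω1² + Ω2² + Ω3²`. -/
theorem cross_block_cube {n : ℕ} (Ω1 Ω2 Ω3 : Matrix (Fin n) (Fin n) ℂ)
    (h12 : Ω1 * Ω2 = Ω2 * Ω1) (h13 : Ω1 * Ω3 = Ω3 * Ω1) (h23 : Ω2 * Ω3 = Ω3 * Ω2)
    (K P : Matrix (Fin 3 × Fin n) (Fin 3 × Fin n) ℂ)
    (hK : K = blockMat3 ![![0, -Ω3, Ω2], ![Ω3, 0, -Ω1], ![-Ω2, Ω1, 0]])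
    (hP : P = blockMat3
      ![![Ω1 ^ 2 + Ω2 ^ 2 + Ω3 ^ 2, 0, 0],
        ![0, Ω1 ^ 2 + Ω2 ^ 2 + Ω3 ^ 2, 0],
        ![0, 0, Ω1 ^ 2 + Ω2 ^ 2 + Ω3 ^ 2]]) :
    K ^ 3 = -(P * K) := by
  have hK' : K = compRingEquiv (Fin 3) (Fin n) ℂ (crossMatrix Ω1 Ω2 Ω3) := hK
  have hP' : P = compRingEquiv (Fin 3) (Fin n) ℂ (scalar (Fin 3) (Ω1 ^ 2 + Ω2 ^ 2 + Ω3 ^ 2)) := by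
    rw [hP, blockMat3_eq_compRingEquiv, scalar_apply, diagonal_fin_three]
  rw [hK', hP', ← map_pow, ← map_mul, ← map_neg, crossMatrix_pow_three h12 h13 h23]
end

section
/- Let K and P be n×n complex matrices such that K·P = P·K and K³ = −P·K. Then exp(K) = I + S·K + C·K², where S := Σ_{m=0}^∞ (−1)^m P^m/(2m+1)! and C := Σ_{m=0}^∞ (−1)^m P^m/(2m+2)! (both series converge absolutely in the matrix norm). -/
open scoped Nat
open NormedSpace

/-! `K ^ 3 = -(P * K)` gives `K ^ (2m+1) = (-P) ^ m * K` and `K ^ (2m+2) = (-P) ^ m * K ^ 2`, so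
splitting the exponential series into odd and even powers and factoring out `K` and `K ^ 2` leaves
the series `S` and `C` in `P`. These converge because their coefficients are dominated by those of
the exponential series. -/

theorem pow_two_mul_add_one_of_pow_three_eq {M : Type*} [Monoid M] {x q : M}
    (h : x ^ 3 = q * x) (m : ℕ) : x ^ (2 * m + 1) = q ^ m * x := by
  induction m with
  | zero => simp
  | succ m ih =>
    calc x ^ (2 * (m + 1) + 1) = x ^ (2 * m + 1) * x ^ 2 := by rw [← pow_add]; ring_nf
      _ = q ^ m * x ^ 3 := by rw [ih, mul_assoc, ← pow_succ']
      _ = q ^ (m + 1) * x := by rw [h, ← mul_assoc, ← pow_succ]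

theorem norm_neg_one_pow_mul_inv_factorial_two_mul_add_le {𝕂 : Type*} [RCLike 𝕂] (m a : ℕ) :
    ‖(-1 : 𝕂) ^ m * ((2 * m + a) ! : 𝕂)⁻¹‖ ≤ (m ! : ℝ)⁻¹ := by
  rw [norm_mul, norm_pow, norm_neg, norm_one, one_pow, one_mul, norm_inv, RCLike.norm_natCast]
  exact inv_anti₀ (by positivity) (by gcongr; omega)

section NormedAlgebra

variable {𝕂 𝔸 : Type*} [RCLike 𝕂] [NormedRing 𝔸] [NormedAlgebra 𝕂 𝔸] [CompleteSpace 𝔸]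

theorem summable_smul_pow_of_norm_le_inv_factorial {c : ℕ → 𝕂}
    (hc : ∀ m, ‖c m‖ ≤ (m ! : ℝ)⁻¹) (x : 𝔸) : Summable fun m => c m • x ^ m :=
  .of_norm_bounded (norm_expSeries_summable' (𝕂 := 𝕂) x) fun m => by
    rw [norm_smul, norm_smul, norm_inv, RCLike.norm_natCast]
    exact mul_le_mul_of_nonneg_right (hc m) (norm_nonneg _)

theorem summable_neg_one_pow_mul_inv_factorial_two_mul_add_smul_pow
    (x : 𝔸) (a : ℕ) :
    Summable fun m => ((-1 : 𝕂) ^ m * ((2 * m + a) ! : 𝕂)⁻¹) • x ^ m :=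
  summable_smul_pow_of_norm_le_inv_factorial
    (fun m => norm_neg_one_pow_mul_inv_factorial_two_mul_add_le m a) x

theorem exp_eq_one_add_mul_add_mul_sq_of_pow_three_eq {x p : 𝔸}
    (h : x ^ 3 = -(p * x)) :
    exp x = 1 + (∑' m, ((-1 : 𝕂) ^ m * ((2 * m + 1) ! : 𝕂)⁻¹) • p ^ m) * x
      + (∑' m, ((-1 : 𝕂) ^ m * ((2 * m + 2) ! : 𝕂)⁻¹) • p ^ m) * x ^ 2 := by
  have hodd_pow (m : ℕ) : x ^ (2 * m + 1) = ((-1 : 𝕂) ^ m • p ^ m) * x := by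
    rw [← smul_pow, pow_two_mul_add_one_of_pow_three_eq (q := (-1 : 𝕂) • p)
      (by rw [h, smul_mul_assoc, neg_one_smul])]
  have heven_pow (m : ℕ) : x ^ (2 * m + 2) = ((-1 : 𝕂) ^ m • p ^ m) * x ^ 2 := by
    rw [pow_succ, hodd_pow, mul_assoc, ← pow_two]
  have hcoeff (r s : 𝕂) (q y : 𝔸) : r • ((s • q) * y) = ((s * r) • q) * y := by
    rw [smul_mul_assoc, smul_mul_assoc, smul_smul, mul_comm]
  have hodd : HasSum (fun m => ((2 * m + 1) ! : 𝕂)⁻¹ • x ^ (2 * m + 1))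
      ((∑' m, ((-1 : 𝕂) ^ m * ((2 * m + 1) ! : 𝕂)⁻¹) • p ^ m) * x) :=
    ((summable_neg_one_pow_mul_inv_factorial_two_mul_add_smul_pow (𝕂 := 𝕂) p 1).hasSum.mul_right
      x).congr_fun fun m => by rw [hodd_pow, hcoeff]
  have heven : HasSum (fun m => ((2 * m) ! : 𝕂)⁻¹ • x ^ (2 * m))
      (1 + (∑' m, ((-1 : 𝕂) ^ m * ((2 * m + 2) ! : 𝕂)⁻¹) • p ^ m) * x ^ 2) := by
    have hfirst : ((2 * 0) ! : 𝕂)⁻¹ • x ^ (2 * 0) = 1 := by simp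
    rw [← hfirst]
    exact HasSum.zero_add (f := fun m => ((2 * m) ! : 𝕂)⁻¹ • x ^ (2 * m))
      (((summable_neg_one_pow_mul_inv_factorial_two_mul_add_smul_pow (𝕂 := 𝕂) p 2).hasSum.mul_right
        (x ^ 2)).congr_fun fun m => by rw [mul_add_one, heven_pow, hcoeff])
  rw [exp_eq_tsum 𝕂, add_right_comm]
  exact (heven.even_add_odd (f := fun k => (k ! : 𝕂)⁻¹ • x ^ k) hodd).tsum_eq

end NormedAlgebra

theorem exp_of_cube_relation_general {n : ℕ} (K P : Matrix (Fin n) (Fin n) ℂ)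
    (hcube : K ^ 3 = -(P * K))
    (S C : Matrix (Fin n) (Fin n) ℂ)
    (hS : S = ∑' m : ℕ, ((-1 : ℂ) ^ m * ((Nat.factorial (2 * m + 1) : ℂ))⁻¹) • P ^ m)
    (hC : C = ∑' m : ℕ, ((-1 : ℂ) ^ m * ((Nat.factorial (2 * m + 2) : ℂ))⁻¹) • P ^ m) :
    (Summable fun m : ℕ => ((-1 : ℂ) ^ m * ((Nat.factorial (2 * m + 1) : ℂ))⁻¹) • P ^ m) ∧
    (Summable fun m : ℕ => ((-1 : ℂ) ^ m * ((Nat.factorial (2 * m + 2) : ℂ))⁻¹) • P ^ m) ∧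
    NormedSpace.exp K = 1 + S * K + C * K ^ 2 := by
  -- Any matrix norm induces the product topology in which `tsum` and `exp` are taken.
  let : NormedRing (Matrix (Fin n) (Fin n) ℂ) := Matrix.linftyOpNormedRing
  let : NormedAlgebra ℂ (Matrix (Fin n) (Fin n) ℂ) := Matrix.linftyOpNormedAlgebra
  subst hS hC
  exact ⟨summable_neg_one_pow_mul_inv_factorial_two_mul_add_smul_pow P 1,
    summable_neg_one_pow_mul_inv_factorial_two_mul_add_smul_pow P 2,
    exp_eq_one_add_mul_add_mul_sq_of_pow_three_eq hcube⟩

/-- if `K·P = P·K` and `K³ = -P·K`, then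
`exp K = I + S·K + C·K²` where `S = Σ (-1)^m P^m/(2m+1)!` and `C = Σ (-1)^m P^m/(2m+2)!`,
both series being convergent. -/
theorem exp_of_cube_relation {n : ℕ} (K P : Matrix (Fin n) (Fin n) ℂ)
    (hcomm : K * P = P * K) (hcube : K ^ 3 = -(P * K))
    (S C : Matrix (Fin n) (Fin n) ℂ)
    (hS : S = ∑' m : ℕ, ((-1 : ℂ) ^ m * ((Nat.factorial (2 * m + 1) : ℂ))⁻¹) • P ^ m)
    (hC : C = ∑' m : ℕ, ((-1 : ℂ) ^ m * ((Nat.factorial (2 * m + 2) : ℂ))⁻¹) • P ^ m) :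
    (Summable fun m : ℕ => ((-1 : ℂ) ^ m * ((Nat.factorial (2 * m + 1) : ℂ))⁻¹) • P ^ m) ∧
    (Summable fun m : ℕ => ((-1 : ℂ) ^ m * ((Nat.factorial (2 * m + 2) : ℂ))⁻¹) • P ^ m) ∧
    NormedSpace.exp K = 1 + S * K + C * K ^ 2 :=
  exp_of_cube_relation_general K P hcube S C hS hC
end
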